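/- For any two standard intervals I and J in S^1, either I ⊆ J, or J ⊆ I, or I and J have disjoint interiors. -/

import Mathlib

/-!
Every standard interval is the arc `[a, a + 2] / (6 · 2ⁿ)` with `a ≡ 2 (mod 3)`. For two of them
at levels `n ≤ n + e`, rescale to the finer grid `(6 · 2ⁿ⁺ᵉ)⁻¹ ℤ`: the coarse arc becomes
`[a · 2ᵉ, (a + 2) · 2ᵉ]`, whose endpoints are prime to `3`, while the only grid point strictly
inside any integer translate `[c, c + 2]` of the fine arc is `c + 1`, a multiple of `3`. So no
endpoint of the coarse arc enters the fine one: they are nested, or meet in at most two points,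
and a finite subset of the circle has empty interior.
-/
noncomputable section

open Set

/-- The circle `S¹ = ℝ/ℤ`. -/
abbrev Circle1 := AddCircle (1 : ℝ)

/-- `(u, v)` are the endpoints of a standard interval, i.e. the real interval `[u,v]` has
the form `[(3k+1)/(3·2ⁿ), (3k+2)/(3·2ⁿ)]` or `[(3k-1)/(3·2ⁿ⁺¹), (3k+1)/(3·2ⁿ⁺¹)]`. -/
def IsStdPair (u v : ℝ) : Prop :=
  ∃ (k : ℤ) (n : ℕ),
    (u = (3 * (k : ℝ) + 1) / (3 * 2 ^ n) ∧ v = (3 * (k : ℝ) + 2) / (3 * 2 ^ n)) ∨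
    (u = (3 * (k : ℝ) - 1) / (3 * 2 ^ (n + 1)) ∧
      v = (3 * (k : ℝ) + 1) / (3 * 2 ^ (n + 1)))

/-- A standard interval of the circle: the image in `S¹` of a real standard interval. -/
def IsStdInterval (I : Set Circle1) : Prop :=
  ∃ u v : ℝ, IsStdPair u v ∧ I = (fun x : ℝ => (x : Circle1)) '' Set.Icc u v

namespace AddCircle

open MeasureTheory

variable {p : ℝ}

theorem coe_eq_coe_iff_exists_add_zsmul {x y : ℝ} :
    (x : AddCircle p) = y ↔ ∃ k : ℤ, x = y + k • p := by
  rw [← sub_eq_zero, ← coe_sub, coe_eq_zero_iff]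
  exact exists_congr fun k => ⟨fun h => by rw [h]; ring, fun h => by rw [h]; ring⟩

instance [Fact (0 < p)] : NullSingletonClass (volume : Measure (AddCircle p)) where
  measure_singleton x := by
    simpa using volume_closedBall (T := p) (x := x) 0

theorem interior_eq_empty_of_finite [Fact (0 < p)] {s : Set (AddCircle p)} (hs : s.Finite) :
    interior s = ∅ :=
  volume.interior_eq_empty_of_null (hs.measure_zero _)

theorem image_coe_Icc_subset_of_le_add {u v u' v' : ℝ} (k : ℤ) (hu : u ≤ u' + k • p)
    (hv : v' + k • p ≤ v) :
    ((↑) : ℝ → AddCircle p) '' Icc u' v' ⊆ ((↑) : ℝ → AddCircle p) '' Icc u v := by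
  rintro _ ⟨x, hx, rfl⟩
  exact ⟨x + k • p, ⟨by linarith [hx.1], by linarith [hx.2]⟩,
    coe_eq_coe_iff_exists_add_zsmul.mpr ⟨k, rfl⟩⟩

theorem image_coe_Icc_inter_subset {u v u' v' : ℝ}
    (h : ∀ k : ℤ, v' + k • p ≤ u ∨ v ≤ u' + k • p) :
    ((↑) : ℝ → AddCircle p) '' Icc u v ∩ ((↑) : ℝ → AddCircle p) '' Icc u' v' ⊆
      {(u : AddCircle p), (v : AddCircle p)} := by
  rintro _ ⟨⟨x, hx, rfl⟩, y, hy, hyx⟩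
  obtain ⟨k, rfl⟩ := coe_eq_coe_iff_exists_add_zsmul.mp hyx.symm
  rcases h k with h | h
  · exact Or.inl (congrArg _ (le_antisymm (by linarith [hy.2]) hx.1))
  · exact Or.inr (congrArg _ (le_antisymm hx.2 (by linarith [hy.1])))

theorem image_coe_Icc_subset_or_interior_inter_eq_empty [Fact (0 < p)] {u v u' v' : ℝ}
    (h : ∀ k : ℤ, (u ≤ u' + k • p ∧ v' + k • p ≤ v) ∨ v' + k • p ≤ u ∨ v ≤ u' + k • p) :
    ((↑) : ℝ → AddCircle p) '' Icc u' v' ⊆ ((↑) : ℝ → AddCircle p) '' Icc u v ∨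
      interior (((↑) : ℝ → AddCircle p) '' Icc u v) ∩
        interior (((↑) : ℝ → AddCircle p) '' Icc u' v') = ∅ := by
  by_cases hsub : ∃ k : ℤ, u ≤ u' + k • p ∧ v' + k • p ≤ v
  · obtain ⟨k, hu, hv⟩ := hsub
    exact Or.inl (image_coe_Icc_subset_of_le_add k hu hv)
  · push Not at hsub
    rw [← interior_inter]
    exact Or.inr <| interior_eq_empty_of_finite <| (toFinite _).subset <|
      image_coe_Icc_inter_subset fun k => (h k).resolve_left fun hk => (hsub k hk.1).not_ge hk.2

end AddCircle

theorem Int.not_three_dvd_mul_two_pow {x : ℤ} (hx : ¬ 3 ∣ x) (e : ℕ) : ¬ 3 ∣ x * 2 ^ e := by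
  intro h
  rcases Int.prime_three.dvd_or_dvd h with h | h
  · exact hx h
  · have := Int.prime_three.dvd_of_dvd_pow h
    omega

theorem Int.nested_or_disjoint_of_three_dvd_add_one {x y c : ℤ} (hc : 3 ∣ c + 1)
    (hx : ¬ 3 ∣ x) (hy : ¬ 3 ∣ y) : (x ≤ c ∧ c + 2 ≤ y) ∨ c + 2 ≤ x ∨ y ≤ c := by
  omega

def gridArc (N p q : ℤ) : Set Circle1 :=
  ((↑) : ℝ → Circle1) '' Icc ((p : ℝ) / N) ((q : ℝ) / N)

theorem gridArc_mul_mul (N p q : ℤ) {m : ℤ} (hm : m ≠ 0) :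
    gridArc (N * m) (p * m) (q * m) = gridArc N p q := by
  have hm' : (m : ℝ) ≠ 0 := Int.cast_ne_zero.mpr hm
  simp only [gridArc, Int.cast_mul, mul_div_mul_right _ _ hm']

theorem gridArc_subset_or_interior_inter_eq_empty {N : ℤ} (hN : 0 < N) {p q r s : ℤ}
    (h : ∀ k : ℤ, (p ≤ r + k * N ∧ s + k * N ≤ q) ∨ s + k * N ≤ p ∨ q ≤ r + k * N) :
    gridArc N r s ⊆ gridArc N p q ∨ interior (gridArc N p q) ∩ interior (gridArc N r s) = ∅ := by
  have hN' : (0 : ℝ) < N := Int.cast_pos.mpr hN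
  have div_le_div {x y : ℤ} (hxy : x ≤ y) : (x : ℝ) / N ≤ y / N :=
    div_le_div_of_nonneg_right (Int.cast_le.mpr hxy) hN'.le
  refine AddCircle.image_coe_Icc_subset_or_interior_inter_eq_empty fun k => ?_
  have shift (x : ℤ) : (x : ℝ) / N + k • (1 : ℝ) = ((x + k * N : ℤ) : ℝ) / N := by
    push_cast
    field_simp
    ring
  simp only [shift]
  rcases h k with ⟨h₁, h₂⟩ | h | h
  · exact Or.inl ⟨div_le_div h₁, div_le_div h₂⟩
  · exact Or.inr (Or.inl (div_le_div h))
  · exact Or.inr (Or.inr (div_le_div h))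

theorem IsStdInterval.exists_eq_gridArc {I : Set Circle1} (hI : IsStdInterval I) :
    ∃ (a : ℤ) (n : ℕ), 3 ∣ a + 1 ∧ I = gridArc (6 * 2 ^ n) a (a + 2) := by
  obtain ⟨u, v, ⟨k, n, ⟨rfl, rfl⟩ | ⟨rfl, rfl⟩⟩, rfl⟩ := hI
  · refine ⟨6 * k + 2, n, ⟨2 * k + 1, by ring⟩, ?_⟩
    simp only [gridArc]
    push_cast
    congr 2 <;> field_simp <;> ring
  · refine ⟨3 * k - 1, n, ⟨k, by ring⟩, ?_⟩
    simp only [gridArc]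
    push_cast
    congr 2 <;> field_simp <;> ring

theorem gridArc_six_mul_two_pow_subset_or_interior_inter_eq_empty {a b : ℤ}
    (ha : 3 ∣ a + 1) (hb : 3 ∣ b + 1) (n e : ℕ) :
    gridArc (6 * 2 ^ (n + e)) b (b + 2) ⊆ gridArc (6 * 2 ^ n) a (a + 2) ∨
      interior (gridArc (6 * 2 ^ n) a (a + 2)) ∩
        interior (gridArc (6 * 2 ^ (n + e)) b (b + 2)) = ∅ := by
  have hscale : (6 : ℤ) * 2 ^ (n + e) = 6 * 2 ^ n * 2 ^ e := by ring
  rw [← gridArc_mul_mul (6 * 2 ^ n) a (a + 2) (pow_ne_zero e two_ne_zero), ← hscale]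
  refine gridArc_subset_or_interior_inter_eq_empty (by positivity) fun k => ?_
  have hc : 3 ∣ b + k * (6 * 2 ^ (n + e)) + 1 := by
    rw [add_right_comm]
    exact dvd_add hb (dvd_mul_of_dvd_right (dvd_mul_of_dvd_left (by norm_num) _) k)
  rw [add_right_comm b 2]
  exact Int.nested_or_disjoint_of_three_dvd_add_one hc
    (Int.not_three_dvd_mul_two_pow (by omega) e) (Int.not_three_dvd_mul_two_pow (by omega) e)

/-- Any two standard intervals are nested or have disjoint interiors. -/
theorem standard_intervals_nested_or_disjoint (I J : Set Circle1)
    (hI : IsStdInterval I) (hJ : IsStdInterval J) :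
    I ⊆ J ∨ J ⊆ I ∨ interior I ∩ interior J = ∅ := by
  obtain ⟨a, n, ha, rfl⟩ := hI.exists_eq_gridArc
  obtain ⟨b, m, hb, rfl⟩ := hJ.exists_eq_gridArc
  rcases le_total n m with hnm | hmn
  · obtain ⟨e, rfl⟩ := Nat.exists_eq_add_of_le hnm
    exact Or.inr (gridArc_six_mul_two_pow_subset_or_interior_inter_eq_empty ha hb n e)
  · obtain ⟨e, rfl⟩ := Nat.exists_eq_add_of_le hmn
    rcases gridArc_six_mul_two_pow_subset_or_interior_inter_eq_empty hb ha m e with h | h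
    · exact Or.inl h
    · exact Or.inr (Or.inr ((inter_comm _ _).trans h))
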